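/- arXiv:2411.03793 — 4 statements merged into one kernel-verified Lean document; each statement's English description precedes it below -/
import Mathlib

section
/- Let $(\Upsilon_{\nu})_{\nu\in\mathscr F}$ (indexed by finitely supported multi-indices) and $(b_j)_{j\ge1}$ be sequences of nonnegative reals such that $\Upsilon_{\mathbf 0}\le C_0$ and, for every nonzero finitely supported multi-index $\nu$, $\Upsilon_{\nu}\le C\sum_{\mathbf 0\neq m\le\nu}\binom{\nu}{m}(|m|!)^{\sigma}\,b^{m}\,\Upsilon_{\nu-m}$, where $C_0,C>0$ and $\sigma\ge1$. Then for every finitely supported multi-index $\nu$, $\Upsilon_{\nu}\le C_0\,a_{|\nu|}\,(|\nu|!)^{\sigma}\,b^{\nu}$, where $a_0=1$ and $a_k=C(C+1)^{k-1}$ for $k\ge1$. -/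
/-!
Strong induction on `|ν|`. Bounding `Υ (ν - m)` by the induction hypothesis, the term of the
recurrence indexed by `m` is at most `C0 b^ν` times `binom(ν, m) |m|!^σ |ν - m|!^σ a_{|ν - m|}`.
Grouping the `m` by `l = |m|`, the multi-index Vandermonde identity
`∑_{|m| = l} binom(ν, m) = binom(|ν|, l)` and `l!^σ (k - l)!^σ binom(k, l) ≤ k!^σ` (as `σ ≥ 1`)
leave `C ∑_{l=1}^{k} a_{k-l} = a_k`, the recursion solved by `a_k = C (C + 1)^(k - 1)`.
-/

open Finset

/-- `|ν|`: the order (modulus) of a finitely supported multi-index. -/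
def msize (ν : ℕ →₀ ℕ) : ℕ := ν.sum fun _ n => n

/-- Multi-index binomial coefficient `∏_j C(ν_j, m_j)`. -/
def mchoose (ν m : ℕ →₀ ℕ) : ℕ := ∏ j ∈ ν.support, (ν j).choose (m j)

/-- `b^ν = ∏_j b_j^{ν_j}`. -/
noncomputable def mpow (b : ℕ → ℝ) (ν : ℕ →₀ ℕ) : ℝ := ∏ j ∈ ν.support, b j ^ ν j

lemma msize_eq_degree (ν : ℕ →₀ ℕ) : msize ν = ν.degree := rfl

lemma msize_eq_zero_iff {ν : ℕ →₀ ℕ} : msize ν = 0 ↔ ν = 0 := Finsupp.degree_eq_zero_iff ν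

lemma msize_mono : Monotone msize := Finsupp.degree_mono

lemma msize_tsub {m ν : ℕ →₀ ℕ} (h : m ≤ ν) : msize (ν - m) = msize ν - msize m := by
  have := congrArg msize (add_tsub_cancel_of_le h)
  rw [msize_eq_degree, map_add, ← msize_eq_degree, ← msize_eq_degree] at this
  omega

lemma mpow_add (b : ℕ → ℝ) (μ ν : ℕ →₀ ℕ) : mpow b (μ + ν) = mpow b μ * mpow b ν :=
  Finsupp.prod_add_index (by simp) fun j _ _ _ => pow_add (b j) _ _

@[simp] lemma mpow_zero (b : ℕ → ℝ) : mpow b 0 = 1 := by simp [mpow]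

lemma mpow_nonneg {b : ℕ → ℝ} (hb : ∀ j, 0 ≤ b j) (ν : ℕ →₀ ℕ) : 0 ≤ mpow b ν :=
  prod_nonneg fun j _ => pow_nonneg (hb j) _

lemma mchoose_eq_zero_of_not_le {ν m : ℕ →₀ ℕ} (hm : m.support ⊆ ν.support) (h : ¬m ≤ ν) :
    mchoose ν m = 0 := by
  simp only [Finsupp.le_def, not_forall, not_le] at h
  obtain ⟨j, hj⟩ := h
  exact prod_eq_zero (hm (Finsupp.mem_support_iff.mpr (by omega))) (Nat.choose_eq_zero_of_lt hj)

-- Compare coefficients of `X ^ l` in `∏ j, (1 + X) ^ ν j = (1 + X) ^ |ν|`.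
lemma sum_mchoose_of_msize_eq (ν : ℕ →₀ ℕ) (l : ℕ) :
    ∑ m ∈ Iic ν with msize m = l, mchoose ν m = (msize ν).choose l := by
  set P : PowerSeries ℕ := ((1 + Polynomial.X : Polynomial ℕ) : PowerSeries ℕ)
  have hP : ∀ n k, PowerSeries.coeff k (P ^ n) = n.choose k := fun n k => by
    rw [← Polynomial.coe_pow, Polynomial.coeff_coe, Polynomial.coeff_one_add_X_pow, Nat.cast_id]
  calc ∑ m ∈ Iic ν with msize m = l, mchoose ν m
      = ∑ m ∈ ν.support.finsuppAntidiag l, mchoose ν m := by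
        refine sum_subset (fun m hm => ?_) fun m hm hm' => ?_
        · rw [mem_filter, mem_Iic] at hm
          exact mem_finsuppAntidiag'.mpr ⟨hm.2, Finsupp.support_mono hm.1⟩
        · obtain ⟨hl, hsupp⟩ := mem_finsuppAntidiag'.mp hm
          exact mchoose_eq_zero_of_not_le hsupp fun hle =>
            hm' (mem_filter.mpr ⟨mem_Iic.mpr hle, hl⟩)
    _ = PowerSeries.coeff l (∏ j ∈ ν.support, P ^ ν j) := by
        simp [PowerSeries.coeff_prod, hP, mchoose]
    _ = (msize ν).choose l := by rw [prod_pow_eq_pow_sum, hP]; rfl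

lemma sum_Iic_sdiff_zero_mul_mchoose {R : Type*} [CommSemiring R] (ν : ℕ →₀ ℕ) (g : ℕ → R) :
    ∑ m ∈ Iic ν \ {0}, g (msize m) * mchoose ν m
      = ∑ l ∈ Icc 1 (msize ν), g l * (msize ν).choose l := by
  have hmaps : ∀ m ∈ Iic ν \ {0}, msize m ∈ Icc 1 (msize ν) := by
    intro m hm
    rw [mem_sdiff, mem_Iic, mem_singleton, ← msize_eq_zero_iff.not] at hm
    rw [mem_Icc]
    exact ⟨Nat.one_le_iff_ne_zero.mpr hm.2, msize_mono hm.1⟩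
  rw [← sum_fiberwise_of_maps_to hmaps]
  refine sum_congr rfl fun l hl => ?_
  have hfiber : {m ∈ Iic ν \ {0} | msize m = l} = {m ∈ Iic ν | msize m = l} := by
    ext m
    simp only [mem_filter, mem_sdiff, mem_singleton, and_congr_left_iff, and_iff_left_iff_imp]
    rintro hml - rfl
    rw [mem_Icc, ← hml, msize_eq_zero_iff.mpr rfl] at hl
    omega
  rw [hfiber, ← sum_mchoose_of_msize_eq, Nat.cast_sum, mul_sum]
  exact sum_congr rfl fun m hm => by rw [(mem_filter.mp hm).2]

lemma factorial_rpow_mul_factorial_rpow_mul_choose_le {σ : ℝ} (hσ : 1 ≤ σ) {k l : ℕ} (h : l ≤ k) :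
    (l.factorial : ℝ) ^ σ * ((k - l).factorial : ℝ) ^ σ * k.choose l ≤ (k.factorial : ℝ) ^ σ := by
  have hchoose : (1 : ℝ) ≤ k.choose l := by exact_mod_cast Nat.choose_pos h
  calc (l.factorial : ℝ) ^ σ * ((k - l).factorial : ℝ) ^ σ * k.choose l
      ≤ (l.factorial : ℝ) ^ σ * ((k - l).factorial : ℝ) ^ σ * (k.choose l : ℝ) ^ σ := by
        gcongr
        exact Real.self_le_rpow_of_one_le hchoose hσ
    _ = (k.factorial : ℝ) ^ σ := by
        rw [← Real.mul_rpow (by positivity) (by positivity),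
          ← Real.mul_rpow (by positivity) (by positivity), ← Nat.choose_mul_factorial_mul_factorial h]
        push_cast
        ring_nf

def boundSeq (C : ℝ) (k : ℕ) : ℝ := if k = 0 then 1 else C * (C + 1) ^ (k - 1)

lemma boundSeq_nonneg {C : ℝ} (hC : 0 ≤ C) (k : ℕ) : 0 ≤ boundSeq C k := by
  unfold boundSeq
  split_ifs <;> positivity

lemma sum_range_boundSeq (C : ℝ) (n : ℕ) : ∑ j ∈ range (n + 1), boundSeq C j = (C + 1) ^ n := by
  induction n with
  | zero => simp [boundSeq]
  | succ n ih =>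
    rw [sum_range_succ, ih, boundSeq, if_neg n.succ_ne_zero, Nat.add_sub_cancel]
    ring

lemma boundSeq_eq_mul_sum {C : ℝ} {k : ℕ} (hk : k ≠ 0) :
    boundSeq C k = C * ∑ l ∈ Icc 1 k, boundSeq C (k - l) := by
  obtain ⟨n, rfl⟩ := Nat.exists_eq_add_one_of_ne_zero hk
  rw [← Ico_add_one_right_eq_Icc, sum_Ico_reflect _ _ le_rfl, Nat.sub_self, Nat.add_sub_cancel,
    Nat.Ico_zero_eq_range, sum_range_boundSeq, boundSeq, if_neg hk, Nat.add_sub_cancel]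

lemma sum_mchoose_mul_le_of_bound {Υ : (ℕ →₀ ℕ) → ℝ} {a b : ℕ → ℝ} {C0 σ : ℝ} (ha : ∀ k, 0 ≤ a k)
    (hb : ∀ j, 0 ≤ b j) (hC0 : 0 ≤ C0) (hσ : 1 ≤ σ) (ν : ℕ →₀ ℕ)
    (hΥ : ∀ m ∈ Iic ν \ {0}, Υ (ν - m) ≤
      C0 * a (msize (ν - m)) * ((msize (ν - m)).factorial : ℝ) ^ σ * mpow b (ν - m)) :
    ∑ m ∈ Iic ν \ {0}, (mchoose ν m : ℝ) * ((msize m).factorial : ℝ) ^ σ * mpow b m * Υ (ν - m)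
      ≤ C0 * ((msize ν).factorial : ℝ) ^ σ * mpow b ν * ∑ l ∈ Icc 1 (msize ν), a (msize ν - l) := by
  set k := msize ν
  let G : ℕ → ℝ := fun l => (l.factorial : ℝ) ^ σ * ((k - l).factorial : ℝ) ^ σ * a (k - l)
  have hterm : ∀ m ∈ Iic ν \ {0},
      (mchoose ν m : ℝ) * ((msize m).factorial : ℝ) ^ σ * mpow b m * Υ (ν - m)
        ≤ C0 * mpow b ν * (G (msize m) * mchoose ν m) := by
    intro m hm
    have hmν : m ≤ ν := mem_Iic.mp (mem_sdiff.mp hm).1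
    have hpow : mpow b ν = mpow b m * mpow b (ν - m) := by
      rw [← mpow_add, add_tsub_cancel_of_le hmν]
    calc (mchoose ν m : ℝ) * ((msize m).factorial : ℝ) ^ σ * mpow b m * Υ (ν - m)
        ≤ (mchoose ν m : ℝ) * ((msize m).factorial : ℝ) ^ σ * mpow b m *
            (C0 * a (msize (ν - m)) * ((msize (ν - m)).factorial : ℝ) ^ σ * mpow b (ν - m)) := by
          have := mpow_nonneg hb m
          gcongr
          exact hΥ m hm
      _ = C0 * mpow b ν * (G (msize m) * mchoose ν m) := by
          rw [hpow, msize_tsub hmν]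
          ring
  calc _ ≤ ∑ m ∈ Iic ν \ {0}, C0 * mpow b ν * (G (msize m) * mchoose ν m) := sum_le_sum hterm
    _ = C0 * mpow b ν * ∑ l ∈ Icc 1 k, G l * k.choose l := by
        rw [← mul_sum, sum_Iic_sdiff_zero_mul_mchoose]
    _ ≤ C0 * mpow b ν * ∑ l ∈ Icc 1 k, (k.factorial : ℝ) ^ σ * a (k - l) := by
        refine mul_le_mul_of_nonneg_left (sum_le_sum fun l hl => ?_)
          (mul_nonneg hC0 (mpow_nonneg hb ν))
        calc G l * k.choose l
            = (l.factorial : ℝ) ^ σ * ((k - l).factorial : ℝ) ^ σ * k.choose l * a (k - l) := by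
              ring
          _ ≤ (k.factorial : ℝ) ^ σ * a (k - l) :=
              mul_le_mul_of_nonneg_right
                (factorial_rpow_mul_factorial_rpow_mul_choose_le hσ (mem_Icc.mp hl).2) (ha _)
    _ = _ := by rw [← mul_sum]; ring

theorem stmt0_general (Υ : (ℕ →₀ ℕ) → ℝ) (b : ℕ → ℝ) (C0 C σ : ℝ)
    (hb : ∀ j, 0 ≤ b j)
    (hC0 : 0 < C0) (hC : 0 < C) (hσ : 1 ≤ σ)
    (h0 : Υ 0 ≤ C0)
    (hrec : ∀ ν : ℕ →₀ ℕ, ν ≠ 0 →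
      Υ ν ≤ C * ∑ m ∈ Finset.Iic ν \ {0},
        (mchoose ν m : ℝ) * ((msize m).factorial : ℝ) ^ σ * mpow b m * Υ (ν - m)) :
    ∀ ν : ℕ →₀ ℕ,
      Υ ν ≤ C0 * (if msize ν = 0 then 1 else C * (C + 1) ^ (msize ν - 1)) *
        ((msize ν).factorial : ℝ) ^ σ * mpow b ν := by
  change ∀ ν, Υ ν ≤ C0 * boundSeq C (msize ν) * ((msize ν).factorial : ℝ) ^ σ * mpow b ν
  intro ν
  induction hk : msize ν using Nat.strong_induction_on generalizing ν with
  | _ k ih =>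
    rcases eq_or_ne ν 0 with rfl | hν
    · simpa [← hk, msize_eq_zero_iff.mpr rfl, boundSeq] using h0
    have hIH : ∀ m ∈ Iic ν \ {0}, Υ (ν - m) ≤
        C0 * boundSeq C (msize (ν - m)) * ((msize (ν - m)).factorial : ℝ) ^ σ * mpow b (ν - m) := by
      intro m hm
      rw [mem_sdiff, mem_Iic, mem_singleton, ← msize_eq_zero_iff.not] at hm
      have := msize_mono hm.1
      exact ih _ (by rw [msize_tsub hm.1]; omega) _ rfl
    calc Υ ν ≤ C * ∑ m ∈ Iic ν \ {0},
          (mchoose ν m : ℝ) * ((msize m).factorial : ℝ) ^ σ * mpow b m * Υ (ν - m) := hrec ν hν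
      _ ≤ C * (C0 * (k.factorial : ℝ) ^ σ * mpow b ν * ∑ l ∈ Icc 1 k, boundSeq C (k - l)) := by
          gcongr
          simpa only [hk] using
            sum_mchoose_mul_le_of_bound (boundSeq_nonneg hC.le) hb hC0.le hσ ν hIH
      _ = C0 * boundSeq C k * (k.factorial : ℝ) ^ σ * mpow b ν := by
          rw [boundSeq_eq_mul_sum (hk ▸ msize_eq_zero_iff.not.mpr hν)]
          ring

theorem stmt0 (Υ : (ℕ →₀ ℕ) → ℝ) (b : ℕ → ℝ) (C0 C σ : ℝ)
    (hΥ : ∀ ν, 0 ≤ Υ ν) (hb : ∀ j, 0 ≤ b j)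
    (hC0 : 0 < C0) (hC : 0 < C) (hσ : 1 ≤ σ)
    (h0 : Υ 0 ≤ C0)
    (hrec : ∀ ν : ℕ →₀ ℕ, ν ≠ 0 →
      Υ ν ≤ C * ∑ m ∈ Finset.Iic ν \ {0},
        (mchoose ν m : ℝ) * ((msize m).factorial : ℝ) ^ σ * mpow b m * Υ (ν - m)) :
    ∀ ν : ℕ →₀ ℕ,
      Υ ν ≤ C0 * (if msize ν = 0 then 1 else C * (C + 1) ^ (msize ν - 1)) *
        ((msize ν).factorial : ℝ) ^ σ * mpow b ν :=
  stmt0_general Υ b C0 C σ hb hC0 hC hσ h0 hrec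
end

section
/- Let $0<\beta<1$ and $\varepsilon>0$, and let $\varphi_\beta(y)=\frac{1}{2\beta^{1/\beta}\Gamma(1+1/\beta)}e^{-|y|^{\beta}/\beta}$ be the $\beta$-Gaussian density with cumulative distribution function $\Phi_\beta$. Then for all $t\in(0,\tfrac12)$, $\exp\big(\tfrac{1}{\beta}|\Phi_\beta^{-1}(t)|^{\beta}\big)\le \frac{H_{\beta,\varepsilon}}{t^{1+\varepsilon}}$, where $H_{\beta,\varepsilon}=\frac{1}{(2\Gamma(1/\beta))^{1+\varepsilon}}\Big(\frac{1-\beta}{e\beta\varepsilon}\Big)^{\frac{(1-\beta)(1+\varepsilon)}{\beta}}(1+\varepsilon)^{\frac{1+\varepsilon}{\beta}}$. -/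
/-- The generalized `β`-Gaussian probability density on `ℝ`. -/
noncomputable def phiBeta (β y : ℝ) : ℝ :=
  1 / (2 * β ^ (1 / β) * Real.Gamma (1 + 1 / β)) * Real.exp (-|y| ^ β / β)

/-- The cumulative distribution function of the `β`-Gaussian distribution. -/
noncomputable def PhiBeta (β w : ℝ) : ℝ := ∫ y in Set.Iic w, phiBeta β y

/-!
Since `Φ_β(0) = 1/2` and `Φ_β` is monotone, `t < 1/2` forces `w < 0`, and by symmetry `t` is
the tail mass `∫_{|w|}^∞ φ_β`. For `y > 0` put `s = y^β/β` and `c = (1-β)/β`, and split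
`e^{-s} = e^{-εs/(1+ε)} e^{-s/(1+ε)}`. The elementary bound `s^c e^{-δs} ≤ (c/(eδ))^c` absorbs the
factor `y^{1-β} = (βs)^c`, leaving `y^{β-1} e^{-s/(1+ε)}`, which integrates in closed form. Hence
`t ≤ T e^{-|w|^β/(β(1+ε))}` for an explicit `T`, and raising this to the power `1+ε` gives the
claim with `H_{β,ε} = T^{1+ε}`.
-/

open Real Set MeasureTheory Filter Topology

theorem integrable_of_even_of_integrableOn_Ioi {E : Type*} [NormedAddCommGroup E] {f : ℝ → E}
    (heven : ∀ x, f (-x) = f x) (hf : IntegrableOn f (Ioi 0)) : Integrable f := by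
  have hIci : IntegrableOn f (Ici 0) := (integrableOn_Ici_iff_integrableOn_Ioi).mpr hf
  have hIic : IntegrableOn f (Iic 0) := by
    rw [← (Measure.measurePreserving_neg volume).integrableOn_comp_preimage
      (Homeomorph.neg ℝ).measurableEmbedding]
    simpa [Function.comp_def, heven] using hIci
  rw [← integrableOn_univ, ← Iic_union_Ioi (a := (0 : ℝ))]
  exact hIic.union hf

theorem integral_Ioi_rpow_mul_exp_neg_mul_rpow {p b m : ℝ} (hp : 0 < p) (hb : 0 < b)
    (hm : 0 ≤ m) :
    ∫ y in Ioi m, y ^ (p - 1) * exp (-b * y ^ p) = exp (-b * m ^ p) / (b * p) := by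
  have hcont : Continuous fun y : ℝ => -exp (-b * y ^ p) / (b * p) := by
    have := continuous_rpow_const hp.le
    fun_prop
  have hderiv (y : ℝ) (hy : y ∈ Ioi m) :
      HasDerivAt (fun y : ℝ => -exp (-b * y ^ p) / (b * p)) (y ^ (p - 1) * exp (-b * y ^ p)) y := by
    have hy0 : y ≠ 0 := (hm.trans_lt hy).ne'
    refine ((((hasDerivAt_rpow_const (p := p) (Or.inl hy0)).const_mul (-b)).exp.neg).div_const
      (b * p)).congr_deriv ?_
    field_simp
  have hlim : Tendsto (fun y : ℝ => -exp (-b * y ^ p) / (b * p)) atTop (𝓝 0) := by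
    have := (tendsto_exp_atBot.comp ((tendsto_rpow_atTop hp).const_mul_atTop_of_neg
      (neg_lt_zero.2 hb))).neg.div_const (b * p)
    simpa [Function.comp_def] using this
  rw [integral_Ioi_of_hasDerivAt_of_nonneg hcont.continuousWithinAt hderiv
    (fun y hy => by have := hm.trans_lt hy; positivity) hlim]
  ring

theorem rpow_mul_exp_neg_mul_le {c δ s : ℝ} (hc : 0 < c) (hδ : 0 < δ) (hs : 0 ≤ s) :
    s ^ c * exp (-(δ * s)) ≤ (c / (exp 1 * δ)) ^ c := by
  have hu : δ * s / c ≤ exp (δ * s / c - 1) := by linarith [add_one_le_exp (δ * s / c - 1)]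
  calc s ^ c * exp (-(δ * s))
      = (c / δ) ^ c * (δ * s / c) ^ c * exp (-(δ * s)) := by
        rw [← mul_rpow (by positivity) (by positivity)]
        field_simp
    _ ≤ (c / δ) ^ c * exp (δ * s / c - 1) ^ c * exp (-(δ * s)) := by
        gcongr
    _ = (c / δ) ^ c * exp (-1) ^ c := by
        rw [← exp_mul, ← exp_mul, mul_assoc, ← exp_add]
        field_simp
        ring_nf
    _ = (c / (exp 1 * δ)) ^ c := by
        rw [← mul_rpow (by positivity) (exp_pos _).le, exp_neg]
        field_simp

section PhiBeta

variable {β : ℝ}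

theorem phiBeta_neg (β y : ℝ) : phiBeta β (-y) = phiBeta β y := by
  simp only [phiBeta, abs_neg]

theorem phiBeta_nonneg (hβ : 0 < β) (y : ℝ) : 0 ≤ phiBeta β y := by
  have : 0 < Gamma (1 + 1 / β) := Gamma_pos_of_pos (by positivity)
  unfold phiBeta
  positivity

theorem integrable_phiBeta (hβ : 0 < β) : Integrable (phiBeta β) := by
  refine integrable_of_even_of_integrableOn_Ioi (phiBeta_neg β) ?_
  have h := integrableOn_rpow_mul_exp_neg_mul_rpow (s := 0) (by norm_num) hβ (inv_pos.2 hβ)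
  refine IntegrableOn.congr_fun (h.const_mul (1 / (2 * β ^ (1 / β) * Gamma (1 + 1 / β))))
    (fun y (hy : 0 < y) => ?_) measurableSet_Ioi
  simp only [phiBeta, abs_of_pos hy, rpow_zero, one_mul, neg_mul, inv_mul_eq_div, neg_div]

theorem PhiBeta_eq_integral_Ioi (β w : ℝ) : PhiBeta β w = ∫ y in Ioi (-w), phiBeta β y := by
  simp only [PhiBeta, ← integral_comp_neg_Iic, phiBeta_neg]

theorem PhiBeta_zero (hβ : 0 < β) : PhiBeta β 0 = 1 / 2 := by
  have hΓ : 0 < Gamma (1 / β + 1) := Gamma_pos_of_pos (by positivity)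
  have hmass : ∫ y in Ioi (0 : ℝ), exp (-|y| ^ β / β) = β ^ (1 / β) * Gamma (1 / β + 1) := by
    rw [show β ^ (1 / β) = β⁻¹ ^ (-1 / β) by rw [neg_div, inv_rpow hβ.le, rpow_neg hβ.le, inv_inv],
      ← integral_exp_neg_mul_rpow hβ (inv_pos.2 hβ)]
    refine setIntegral_congr_fun measurableSet_Ioi fun y (hy : 0 < y) => ?_
    simp only [abs_of_pos hy, neg_mul, inv_mul_eq_div, neg_div]
  rw [PhiBeta_eq_integral_Ioi, neg_zero]
  simp only [phiBeta]
  rw [integral_const_mul, hmass, add_comm 1]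
  field_simp

theorem PhiBeta_mono (hβ : 0 < β) : Monotone (PhiBeta β) := fun _ _ hvw =>
  setIntegral_mono_set (integrable_phiBeta hβ).integrableOn
    (ae_of_all _ (phiBeta_nonneg hβ)) (Iic_subset_Iic.2 hvw).eventuallyLE

theorem neg_of_PhiBeta_lt_half (hβ : 0 < β) {w : ℝ} (hw : PhiBeta β w < 1 / 2) : w < 0 := by
  by_contra! h
  exact (PhiBeta_zero hβ ▸ PhiBeta_mono hβ h).not_gt hw

end PhiBeta

section Tail

variable {β ε : ℝ}

theorem exp_neg_rpow_div_le (hβ0 : 0 < β) (hβ1 : β < 1) (hε : 0 < ε) {y : ℝ} (hy : 0 < y) :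
    exp (-y ^ β / β) ≤ β ^ ((1 - β) / β) * ((1 - β) / (exp 1 * β * ε) * (1 + ε)) ^ ((1 - β) / β)
      * (y ^ (β - 1) * exp (-(β * (1 + ε))⁻¹ * y ^ β)) := by
  have hc : 0 < (1 - β) / β := div_pos (by linarith) hβ0
  have hs : 0 ≤ y ^ β / β := by positivity
  have hmax := rpow_mul_exp_neg_mul_le hc (δ := ε / (1 + ε)) (by positivity) hs
  rw [show (1 - β) / β / (exp 1 * (ε / (1 + ε))) = (1 - β) / (exp 1 * β * ε) * (1 + ε) by
    field_simp] at hmax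
  have hsplit : exp (-y ^ β / β)
      = exp (-(ε / (1 + ε) * (y ^ β / β))) * exp (-(β * (1 + ε))⁻¹ * y ^ β) := by
    rw [← exp_add]
    congr 1
    field_simp
    ring
  have hcancel : β ^ ((1 - β) / β) * (y ^ β / β) ^ ((1 - β) / β) * y ^ (β - 1) = 1 := by
    rw [← mul_rpow hβ0.le hs, mul_div_cancel₀ _ hβ0.ne', ← rpow_mul hy.le, ← rpow_add hy,
      show β * ((1 - β) / β) + (β - 1) = 0 by field_simp; ring, rpow_zero]
  calc exp (-y ^ β / β)
      = β ^ ((1 - β) / β) * y ^ (β - 1)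
          * ((y ^ β / β) ^ ((1 - β) / β) * exp (-(ε / (1 + ε) * (y ^ β / β))))
          * exp (-(β * (1 + ε))⁻¹ * y ^ β) := by
        rw [hsplit]
        linear_combination (-(exp (-(ε / (1 + ε) * (y ^ β / β)))
          * exp (-(β * (1 + ε))⁻¹ * y ^ β))) * hcancel
    _ ≤ β ^ ((1 - β) / β) * y ^ (β - 1)
          * ((1 - β) / (exp 1 * β * ε) * (1 + ε)) ^ ((1 - β) / β)
          * exp (-(β * (1 + ε))⁻¹ * y ^ β) := by
        gcongr
    _ = _ := by ring

theorem integral_Ioi_exp_neg_rpow_div_le (hβ0 : 0 < β) (hβ1 : β < 1) (hε : 0 < ε) {m : ℝ}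
    (hm : 0 ≤ m) :
    ∫ y in Ioi m, exp (-y ^ β / β)
      ≤ β ^ ((1 - β) / β) * ((1 - β) / (exp 1 * β * ε) * (1 + ε)) ^ ((1 - β) / β)
        * ((1 + ε) * exp (-(β * (1 + ε))⁻¹ * m ^ β)) := by
  have hint : IntegrableOn (fun y => y ^ (β - 1) * exp (-(β * (1 + ε))⁻¹ * y ^ β)) (Ioi m) :=
    (integrableOn_rpow_mul_exp_neg_mul_rpow (by linarith) hβ0 (by positivity)).mono_set
      (Ioi_subset_Ioi hm)
  calc ∫ y in Ioi m, exp (-y ^ β / β)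
      ≤ ∫ y in Ioi m, β ^ ((1 - β) / β) * ((1 - β) / (exp 1 * β * ε) * (1 + ε)) ^ ((1 - β) / β)
          * (y ^ (β - 1) * exp (-(β * (1 + ε))⁻¹ * y ^ β)) :=
        integral_mono_of_nonneg (ae_of_all _ fun _ => (exp_pos _).le) (hint.const_mul _)
          ((ae_restrict_mem measurableSet_Ioi).mono fun y hy =>
            exp_neg_rpow_div_le hβ0 hβ1 hε (hm.trans_lt hy))
    _ = _ := by
        rw [integral_const_mul, integral_Ioi_rpow_mul_exp_neg_mul_rpow hβ0 (by positivity) hm]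
        field_simp

/-- `tailConst β ε ^ (1 + ε)` is the constant `H_{β,ε}`. -/
noncomputable def tailConst (β ε : ℝ) : ℝ :=
  (2 * Gamma (1 / β))⁻¹ * ((1 - β) / (exp 1 * β * ε) * (1 + ε)) ^ ((1 - β) / β) * (1 + ε)

theorem tailConst_pos (hβ0 : 0 < β) (hβ1 : β < 1) (hε : 0 < ε) : 0 < tailConst β ε := by
  have : 0 < Gamma (1 / β) := Gamma_pos_of_pos (by positivity)
  have : 0 < 1 - β := by linarith
  unfold tailConst
  positivity

theorem tailConst_rpow (hβ0 : 0 < β) (hβ1 : β < 1) (hε : 0 < ε) :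
    tailConst β ε ^ (1 + ε)
      = 1 / (2 * Gamma (1 / β)) ^ (1 + ε)
          * ((1 - β) / (exp 1 * β * ε)) ^ ((1 - β) * (1 + ε) / β)
          * (1 + ε) ^ ((1 + ε) / β) := by
  have : 0 < Gamma (1 / β) := Gamma_pos_of_pos (by positivity)
  have : 0 < 1 - β := by linarith
  have h1ε : 0 < 1 + ε := by linarith
  have hsplit :
      (1 + ε) ^ ((1 + ε) / β) = (1 + ε) ^ ((1 - β) * (1 + ε) / β) * (1 + ε) ^ (1 + ε) := by
    rw [← rpow_add h1ε]
    field_simp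
    ring_nf
  rw [tailConst, mul_rpow (by positivity) h1ε.le, mul_rpow (by positivity) (by positivity),
    inv_rpow (by positivity), ← rpow_mul (by positivity), mul_rpow (by positivity) h1ε.le,
    hsplit, show (1 - β) / β * (1 + ε) = (1 - β) * (1 + ε) / β by ring]
  ring

theorem PhiBeta_le_tailConst_mul (hβ0 : 0 < β) (hβ1 : β < 1) (hε : 0 < ε) {w : ℝ} (hw : w ≤ 0) :
    PhiBeta β w ≤ tailConst β ε * exp (-(β * (1 + ε))⁻¹ * |w| ^ β) := by
  have hΓ : 0 < Gamma (1 / β) := Gamma_pos_of_pos (by positivity)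
  have hnorm : 1 / (2 * β ^ (1 / β) * Gamma (1 + 1 / β)) * β ^ ((1 - β) / β)
      = (2 * Gamma (1 / β))⁻¹ := by
    have hβpow : β ^ (1 / β) = β ^ ((1 - β) / β) * β := by
      rw [← rpow_add_one hβ0.ne']
      congr 1
      field_simp
      ring
    rw [add_comm, Gamma_add_one (by positivity), hβpow]
    field_simp
  have hIoi : ∫ y in Ioi (-w), phiBeta β y
      = 1 / (2 * β ^ (1 / β) * Gamma (1 + 1 / β)) * ∫ y in Ioi |w|, exp (-y ^ β / β) := by
    rw [abs_of_nonpos hw, ← integral_const_mul]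
    refine setIntegral_congr_fun measurableSet_Ioi fun y (hy : -w < y) => ?_
    rw [phiBeta, abs_of_pos (by linarith)]
  rw [PhiBeta_eq_integral_Ioi, hIoi]
  calc _ ≤ 1 / (2 * β ^ (1 / β) * Gamma (1 + 1 / β)) * (β ^ ((1 - β) / β)
          * ((1 - β) / (exp 1 * β * ε) * (1 + ε)) ^ ((1 - β) / β)
          * ((1 + ε) * exp (-(β * (1 + ε))⁻¹ * |w| ^ β))) := by
        gcongr
        exact integral_Ioi_exp_neg_rpow_div_le hβ0 hβ1 hε (abs_nonneg w)
    _ = tailConst β ε * exp (-(β * (1 + ε))⁻¹ * |w| ^ β) := by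
        rw [tailConst, ← hnorm]
        ring

end Tail

theorem stmt6 (β ε : ℝ) (hβ0 : 0 < β) (hβ1 : β < 1) (hε : 0 < ε) :
    ∀ t w : ℝ, 0 < t → t < 1 / 2 → PhiBeta β w = t →
      Real.exp (|w| ^ β / β)
        ≤ (1 / (2 * Real.Gamma (1 / β)) ^ (1 + ε)
            * ((1 - β) / (Real.exp 1 * β * ε)) ^ ((1 - β) * (1 + ε) / β)
            * (1 + ε) ^ ((1 + ε) / β)) / t ^ (1 + ε) := by
  intro t w ht ht2 hPhi
  have hw : w < 0 := neg_of_PhiBeta_lt_half hβ0 (hPhi ▸ ht2)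
  have hpow : t ^ (1 + ε) ≤ tailConst β ε ^ (1 + ε) * exp (-(|w| ^ β / β)) := by
    have h := rpow_le_rpow ht.le (hPhi ▸ PhiBeta_le_tailConst_mul hβ0 hβ1 hε hw.le)
      (by linarith : 0 ≤ 1 + ε)
    rwa [mul_rpow (tailConst_pos hβ0 hβ1 hε).le (exp_pos _).le, ← exp_mul,
      show -(β * (1 + ε))⁻¹ * |w| ^ β * (1 + ε) = -(|w| ^ β / β) by field_simp] at h
  rw [← tailConst_rpow hβ0 hβ1 hε, le_div_iff₀ (by positivity)]
  calc exp (|w| ^ β / β) * t ^ (1 + ε)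
      ≤ exp (|w| ^ β / β) * (tailConst β ε ^ (1 + ε) * exp (-(|w| ^ β / β))) := by gcongr
    _ = tailConst β ε ^ (1 + ε) := by
        rw [mul_left_comm, ← exp_add, add_neg_cancel, exp_zero, mul_one]
end

section
/- Let $0<\tau<\beta$, let $(\alpha_j)_{j\ge1}\in\ell^1(\mathbb N)$ with $\alpha_j\ge0$, let $\mu_\beta=\bigotimes_{j\ge1}\mathcal N_\beta(0,1)$ be the countable product of $\beta$-Gaussian measures, and set $a_{\min}(y)=c\exp\big(-\sum_{j\ge1}\alpha_j|y_j|^{\tau}\big)$ for $c>0$. Then for every $q\in(0,\infty)$, the function $1/a_{\min}$ lies in $L^q_{\mu_\beta}$, i.e., $\int \exp\big(q\sum_{j\ge1}\alpha_j|y_j|^{\tau}\big)\,\mu_\beta(dy)<\infty$. -/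
open MeasureTheory

/-- The `β`-Gaussian measure `𝒩_β(0,1)` on `ℝ`. -/
noncomputable def gaussBeta (β : ℝ) : Measure ℝ :=
  volume.withDensity fun y => ENNReal.ofReal (phiBeta β y)

/-- `μ` is the countable product `⨂_{j≥1} 𝒩_β(0,1)` on `ℝ^ℕ`: it is a probability
measure whose finite-dimensional cylinder probabilities factor as products of
one-dimensional `β`-Gaussian measures. -/
def IsProductBetaGaussian (β : ℝ) (μ : Measure (ℕ → ℝ)) : Prop :=
  IsProbabilityMeasure μ ∧
    ∀ (s : Finset ℕ) (A : ℕ → Set ℝ), (∀ i, MeasurableSet (A i)) →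
      μ {y : ℕ → ℝ | ∀ i ∈ s, y i ∈ A i} = ∏ i ∈ s, gaussBeta β (A i)

/-
Under `μ` the coordinates `Y_j` are independent with law `𝒩_β(0,1)`. Since `τ < β`, every
`D |t|^τ` is at most `M + |t|^β / (2β)`, so all the moments `𝔼 exp (D |Y|^τ)` are finite; with
`e^x ≤ 1 + x e^x` this gives `𝔼 exp (a |Y|^τ) ≤ exp (a K)` uniformly for `0 ≤ a ≤ D`.
Independence then bounds `𝔼 exp (q ∑_{j<n} α_j |Y_j|^τ)` by `exp (q K ∑ α_j)` for every `n`,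
and monotone convergence passes to the full series.
-/

open Real Set ProbabilityTheory
open scoped ENNReal NNReal

lemma exists_mul_rpow_le_add_mul_rpow {τ β : ℝ} (hτ : 0 ≤ τ) (hτβ : τ < β) (D : ℝ) {ε : ℝ}
    (hε : 0 < ε) : ∃ M, ∀ x, 0 ≤ x → D * x ^ τ ≤ M + ε * x ^ β := by
  -- `|D| x^τ = ε x^β` at `x = T`
  set T := (|D| / ε) ^ (β - τ)⁻¹
  have hT : 0 ≤ T := by positivity
  refine ⟨|D| * T ^ τ, fun x hx => ?_⟩
  have hD : D * x ^ τ ≤ |D| * x ^ τ :=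
    mul_le_mul_of_nonneg_right (le_abs_self D) (rpow_nonneg hx τ)
  have hεx : 0 ≤ ε * x ^ β := by positivity
  rcases le_or_gt x T with hxT | hTx
  · have := mul_le_mul_of_nonneg_left (rpow_le_rpow hx hxT hτ) (abs_nonneg D)
    linarith
  · have hx0 : 0 < x := hT.trans_lt hTx
    have hTpow : T ^ (β - τ) = |D| / ε := by
      rw [← rpow_mul (by positivity), inv_mul_cancel₀ (by linarith), rpow_one]
    have hDx : |D| ≤ ε * x ^ (β - τ) := by
      rw [← div_le_iff₀' hε, ← hTpow]
      exact rpow_le_rpow hT hTx.le (by linarith)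
    have hsplit : ε * x ^ β = ε * x ^ (β - τ) * x ^ τ := by
      rw [mul_assoc, ← rpow_add hx0, sub_add_cancel]
    have := mul_le_mul_of_nonneg_right hDx (rpow_nonneg hx τ)
    have : 0 ≤ |D| * T ^ τ := by positivity
    linarith

lemma integrable_exp_neg_mul_abs_rpow {β b : ℝ} (hβ : 0 < β) (hb : 0 < b) :
    Integrable fun t : ℝ => exp (-b * |t| ^ β) := by
  have h := integrableOn_rpow_mul_exp_neg_mul_rpow (s := 0) (by norm_num) hβ hb
  have h' := (integrable_fun_norm_addHaar (E := ℝ) volume (f := fun y => exp (-b * y ^ β))).2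
    (by simpa using h)
  simpa only [Real.norm_eq_abs] using h'

lemma measurable_phiBeta (β : ℝ) : Measurable (phiBeta β) := by
  unfold phiBeta
  fun_prop

lemma lintegral_gaussBeta {β : ℝ} {g : ℝ → ℝ≥0∞} (hg : Measurable g) :
    ∫⁻ t, g t ∂gaussBeta β = ∫⁻ t, g t * ENNReal.ofReal (phiBeta β t) := by
  rw [gaussBeta, lintegral_withDensity_eq_lintegral_mul₀
    (measurable_phiBeta β).ennreal_ofReal.aemeasurable hg.aemeasurable]
  simp only [Pi.mul_apply, mul_comm]

lemma lintegral_exp_mul_abs_rpow_gaussBeta_lt_top {τ β : ℝ} (hτ : 0 ≤ τ) (hτβ : τ < β) (D : ℝ) :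
    ∫⁻ t, ENNReal.ofReal (exp (D * |t| ^ τ)) ∂gaussBeta β < ⊤ := by
  have hβ : 0 < β := hτ.trans_lt hτβ
  obtain ⟨M, hM⟩ := exists_mul_rpow_le_add_mul_rpow hτ hτβ D (inv_pos.2 (mul_pos two_pos hβ))
  set Z := 1 / (2 * β ^ (1 / β) * Gamma (1 + 1 / β))
  have hint : Integrable fun t => exp (D * |t| ^ τ) * phiBeta β t := by
    refine ((integrable_exp_neg_mul_abs_rpow hβ (inv_pos.2 (mul_pos two_pos hβ))).const_mul
      (|Z| * exp M)).mono' (by unfold phiBeta; fun_prop) (ae_of_all _ fun t => ?_)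
    have hexp : exp (D * |t| ^ τ) * exp (-|t| ^ β / β) ≤
        exp M * exp (-(2 * β)⁻¹ * |t| ^ β) := by
      rw [← exp_add, ← exp_add, exp_le_exp]
      have := hM |t| (abs_nonneg t)
      have hdiv : -|t| ^ β / β = -2 * ((2 * β)⁻¹ * |t| ^ β) := by field_simp
      linarith
    rw [Real.norm_eq_abs, phiBeta, abs_mul, abs_mul, abs_of_pos (exp_pos _),
      abs_of_pos (exp_pos _)]
    calc exp (D * |t| ^ τ) * (|Z| * exp (-|t| ^ β / β))
        = |Z| * (exp (D * |t| ^ τ) * exp (-|t| ^ β / β)) := by ring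
      _ ≤ |Z| * (exp M * exp (-(2 * β)⁻¹ * |t| ^ β)) := by gcongr
      _ = _ := by ring
  rw [lintegral_gaussBeta (by fun_prop)]
  simpa only [ENNReal.ofReal_mul (exp_pos _).le] using hint.lintegral_lt_top

lemma exp_le_one_add_mul_exp (x : ℝ) : exp x ≤ 1 + x * exp x := by
  have h := mul_le_mul_of_nonneg_right (add_one_le_exp (-x)) (exp_pos x).le
  rw [exp_neg, inv_mul_cancel₀ (exp_pos x).ne'] at h
  linarith

-- Uniform in `a ∈ [0, D]` because `e^{a s} ≤ 1 + a s e^{a s} ≤ 1 + a e^{(D + 1) s}` for `s ≥ 0`.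
lemma lintegral_exp_mul_le_exp_mul {Ω : Type*} [MeasurableSpace Ω] {ν : Measure Ω}
    [IsProbabilityMeasure ν] {f : Ω → ℝ} (hf : ∀ x, 0 ≤ f x) {a D : ℝ} {K : ℝ≥0}
    (ha : 0 ≤ a) (haD : a ≤ D) (hK : ∫⁻ x, ENNReal.ofReal (exp ((D + 1) * f x)) ∂ν ≤ K) :
    ∫⁻ x, ENNReal.ofReal (exp (a * f x)) ∂ν ≤ ENNReal.ofReal (exp (a * K)) := by
  have hpt : ∀ x, ENNReal.ofReal (exp (a * f x)) ≤
      1 + ENNReal.ofReal a * ENNReal.ofReal (exp ((D + 1) * f x)) := by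
    intro x
    have hfx : f x * exp (a * f x) ≤ exp ((D + 1) * f x) := by
      rw [add_mul, one_mul, exp_add, mul_comm (exp _)]
      have hfe : f x ≤ exp (f x) := by linarith [add_one_le_exp (f x)]
      have hae : exp (a * f x) ≤ exp (D * f x) := by gcongr; exact hf x
      exact mul_le_mul hfe hae (exp_pos _).le (exp_pos _).le
    rw [← ENNReal.ofReal_mul ha, ← ENNReal.ofReal_one,
      ← ENNReal.ofReal_add zero_le_one (by positivity)]
    refine ENNReal.ofReal_le_ofReal ((exp_le_one_add_mul_exp _).trans ?_)
    rw [mul_assoc]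
    gcongr
  calc ∫⁻ x, ENNReal.ofReal (exp (a * f x)) ∂ν
      ≤ ∫⁻ x, (1 + ENNReal.ofReal a * ENNReal.ofReal (exp ((D + 1) * f x))) ∂ν :=
        lintegral_mono hpt
    _ = 1 + ENNReal.ofReal a * ∫⁻ x, ENNReal.ofReal (exp ((D + 1) * f x)) ∂ν := by
        rw [lintegral_add_left measurable_const, lintegral_const_mul' _ _ ENNReal.ofReal_ne_top]
        simp
    _ ≤ 1 + ENNReal.ofReal a * K := by gcongr
    _ = ENNReal.ofReal (1 + a * K) := by
        rw [ENNReal.ofReal_add zero_le_one (by positivity), ENNReal.ofReal_mul ha]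
        simp
    _ ≤ ENNReal.ofReal (exp (a * K)) :=
        ENNReal.ofReal_le_ofReal (by linarith [add_one_le_exp (a * K)])

lemma lintegral_exp_tsum_le {X : Type*} [MeasurableSpace X] {μ : Measure X} {u : ℕ → X → ℝ}
    (hu : ∀ j, Measurable (u j)) (hu0 : ∀ j x, 0 ≤ u j x) {C : ℝ≥0∞}
    (hC : ∀ n, ∫⁻ x, ENNReal.ofReal (exp (∑ j ∈ Finset.range n, u j x)) ∂μ ≤ C) :
    ∫⁻ x, ENNReal.ofReal (exp (∑' j, u j x)) ∂μ ≤ C := by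
  set G : ℕ → X → ℝ≥0∞ := fun n x => ENNReal.ofReal (exp (∑ j ∈ Finset.range n, u j x))
  have hG : Monotone G := fun m n hmn x =>
    ENNReal.ofReal_le_ofReal <| exp_le_exp.2 <| Finset.sum_le_sum_of_subset_of_nonneg
      (Finset.range_subset_range.2 hmn) fun j _ _ => hu0 j x
  have hpt : ∀ x, ENNReal.ofReal (exp (∑' j, u j x)) ≤ ⨆ n, G n x := by
    intro x
    by_cases hx : Summable fun j => u j x
    · have hlim := (ENNReal.continuous_ofReal.comp continuous_exp).continuousAt.tendsto.comp
        hx.hasSum.tendsto_sum_nat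
      exact le_of_tendsto' hlim fun n => le_iSup (fun n => G n x) n
    · simpa [tsum_eq_zero_of_not_summable hx, G] using le_iSup (fun n => G n x) 0
  calc ∫⁻ x, ENNReal.ofReal (exp (∑' j, u j x)) ∂μ ≤ ∫⁻ x, ⨆ n, G n x ∂μ := lintegral_mono hpt
    _ = ⨆ n, ∫⁻ x, G n x ∂μ := lintegral_iSup (fun n => by fun_prop) hG
    _ ≤ C := iSup_le hC

namespace IsProductBetaGaussian

variable {β : ℝ} {μ : Measure (ℕ → ℝ)}

lemma map_eval (hμ : IsProductBetaGaussian β μ) (j : ℕ) :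
    μ.map (fun y => y j) = gaussBeta β := by
  ext A hA
  rw [Measure.map_apply (measurable_pi_apply j) hA]
  simpa [Set.preimage] using hμ.2 {j} (fun _ => A) (fun _ => hA)

lemma isProbabilityMeasure_gaussBeta (hμ : IsProductBetaGaussian β μ) :
    IsProbabilityMeasure (gaussBeta β) := by
  have := hμ.1
  rw [← hμ.map_eval 0]
  exact Measure.isProbabilityMeasure_map (measurable_pi_apply 0).aemeasurable

lemma iIndepFun_eval (hμ : IsProductBetaGaussian β μ) :
    iIndepFun (fun j (y : ℕ → ℝ) => y j) μ := by
  classical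
  rw [iIndepFun_iff_measure_inter_preimage_eq_mul]
  intro S A hA
  have hA' : ∀ i, MeasurableSet (if i ∈ S then A i else univ) := fun i => by
    split_ifs with hi
    exacts [hA i hi, MeasurableSet.univ]
  have hset : ⋂ i ∈ S, (fun y : ℕ → ℝ => y i) ⁻¹' A i =
      {y | ∀ i ∈ S, y i ∈ if i ∈ S then A i else univ} := by
    ext y
    simp +contextual
  rw [hset, hμ.2 S _ hA']
  refine Finset.prod_congr rfl fun i hi => ?_
  rw [if_pos hi, ← hμ.map_eval i, Measure.map_apply (measurable_pi_apply i) (hA i hi)]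

lemma lintegral_prod_eval (hμ : IsProductBetaGaussian β μ) (s : Finset ℕ) {g : ℕ → ℝ → ℝ≥0∞}
    (hg : ∀ j, Measurable (g j)) :
    ∫⁻ y, ∏ j ∈ s, g j (y j) ∂μ = ∏ j ∈ s, ∫⁻ t, g j t ∂gaussBeta β := by
  have h := lintegral_prod_eq_prod_lintegral_of_indepFun s _ (hμ.iIndepFun_eval.comp g hg)
    fun j => (hg j).comp (measurable_pi_apply j)
  simp only [Function.comp_apply] at h
  rw [h]
  refine Finset.prod_congr rfl fun j _ => ?_
  rw [← hμ.map_eval j, lintegral_map (hg j) (measurable_pi_apply j)]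

lemma exists_lintegral_exp_sum_le (hμ : IsProductBetaGaussian β μ) {τ : ℝ} (hτ : 0 ≤ τ)
    (hτβ : τ < β) {a : ℕ → ℝ} (ha : ∀ j, 0 ≤ a j) (hsum : Summable a) :
    ∃ C < ∞, ∀ s : Finset ℕ,
      ∫⁻ y, ENNReal.ofReal (exp (∑ j ∈ s, a j * |y j| ^ τ)) ∂μ ≤ C := by
  have := hμ.isProbabilityMeasure_gaussBeta
  set D := ∑' j, a j
  set L := ∫⁻ t, ENNReal.ofReal (exp ((D + 1) * |t| ^ τ)) ∂gaussBeta β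
  have hL : L ≠ ∞ := (lintegral_exp_mul_abs_rpow_gaussBeta_lt_top hτ hτβ _).ne
  refine ⟨ENNReal.ofReal (exp (D * L.toNNReal)), ENNReal.ofReal_lt_top, fun s => ?_⟩
  have hfactor : ∀ y : ℕ → ℝ, ENNReal.ofReal (exp (∑ j ∈ s, a j * |y j| ^ τ)) =
      ∏ j ∈ s, ENNReal.ofReal (exp (a j * |y j| ^ τ)) := fun y => by
    rw [exp_sum, ENNReal.ofReal_prod_of_nonneg fun j _ => (exp_pos _).le]
  simp_rw [hfactor]
  rw [hμ.lintegral_prod_eval s (g := fun j t => ENNReal.ofReal (exp (a j * |t| ^ τ)))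
    fun j => by fun_prop]
  calc ∏ j ∈ s, ∫⁻ t, ENNReal.ofReal (exp (a j * |t| ^ τ)) ∂gaussBeta β
      ≤ ∏ j ∈ s, ENNReal.ofReal (exp (a j * L.toNNReal)) :=
        Finset.prod_le_prod' fun j _ => lintegral_exp_mul_le_exp_mul
          (fun t => rpow_nonneg (abs_nonneg t) τ) (ha j) (hsum.le_tsum j fun k _ => ha k)
          (ENNReal.coe_toNNReal hL).ge
    _ = ENNReal.ofReal (exp ((∑ j ∈ s, a j) * L.toNNReal)) := by
        rw [Finset.sum_mul, exp_sum, ENNReal.ofReal_prod_of_nonneg fun j _ => (exp_pos _).le]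
    _ ≤ ENNReal.ofReal (exp (D * L.toNNReal)) := by
        gcongr
        exact hsum.sum_le_tsum s fun j _ => ha j

end IsProductBetaGaussian

theorem stmt11 (β τ c q : ℝ) (α : ℕ → ℝ)
    (hτ : 0 < τ) (hτβ : τ < β) (hα : ∀ j, 0 ≤ α j) (hsum : Summable α)
    (hc : 0 < c) (hq : 0 < q)
    (μ : Measure (ℕ → ℝ)) (hμ : IsProductBetaGaussian β μ) :
    ∫⁻ y in {y : ℕ → ℝ | Summable fun j => α j * |y j| ^ τ},
        ENNReal.ofReal ((c * Real.exp (-∑' j, α j * |y j| ^ τ))⁻¹ ^ q) ∂μ < ⊤ := by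
  have hqα : ∀ j, 0 ≤ q * α j := fun j => mul_nonneg hq.le (hα j)
  obtain ⟨C, hC, hbound⟩ := hμ.exists_lintegral_exp_sum_le hτ.le hτβ hqα (hsum.mul_left q)
  have hintegrand : ∀ y : ℕ → ℝ,
      ENNReal.ofReal ((c * exp (-∑' j, α j * |y j| ^ τ))⁻¹ ^ q) =
        ENNReal.ofReal (c⁻¹ ^ q) * ENNReal.ofReal (exp (∑' j, q * α j * |y j| ^ τ)) := fun y => by
    simp_rw [mul_assoc q, tsum_mul_left]
    rw [mul_inv, ← exp_neg, neg_neg, mul_rpow (by positivity) (exp_pos _).le, ← exp_mul,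
      mul_comm _ q, ENNReal.ofReal_mul (by positivity)]
  calc ∫⁻ y in {y : ℕ → ℝ | Summable fun j => α j * |y j| ^ τ},
        ENNReal.ofReal ((c * exp (-∑' j, α j * |y j| ^ τ))⁻¹ ^ q) ∂μ
      ≤ ∫⁻ y, ENNReal.ofReal (c⁻¹ ^ q) * ENNReal.ofReal (exp (∑' j, q * α j * |y j| ^ τ)) ∂μ := by
        simp_rw [hintegrand]
        exact setLIntegral_le_lintegral _ _
    _ ≤ ENNReal.ofReal (c⁻¹ ^ q) * C := by
        rw [lintegral_const_mul' _ _ ENNReal.ofReal_ne_top]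
        gcongr
        exact lintegral_exp_tsum_le (fun j => by fun_prop)
          (fun j y => mul_nonneg (hqα j) (rpow_nonneg (abs_nonneg _) τ)) fun n => hbound _
    _ < ⊤ := ENNReal.mul_lt_top ENNReal.ofReal_lt_top hC
end

section
/- For every finitely supported multi-index $\nu\in\mathbb N_0^{\mathbb N}$ and every real $\sigma\ge1$, $\sum_{m\le\nu}\binom{\nu}{m}(|m|!)^{\sigma}\le e^{\sigma}\,(|\nu|!)^{\sigma}$. -/
/-!
Grouping the multi-indices `m ≤ ν` by their order `|m| = ℓ`, Vandermonde's identity (the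
coefficient of `X^ℓ` in `∏_j (X + 1)^{ν_j} = (X + 1)^{|ν|}`) turns `∑_m C(ν,m) |m|!` into
`∑_ℓ C(n,ℓ) ℓ! = n! ∑_ℓ 1/(n-ℓ)! ≤ e n!`, where `n = |ν|`. The exponent `σ` is absorbed
termwise through `(|m|!)^σ ≤ |m|! (n!)^(σ-1)`, and `e ≤ e^σ`.
-/

open Finset

open Polynomial Nat

theorem Finsupp.sum_Iic_prod_eq_prod_sum {ι R : Type*} [DecidableEq ι] [CommSemiring R]
    (ν : ι →₀ ℕ) (f : ι → ℕ → R) :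
    ∑ m ∈ Iic ν, ∏ j ∈ ν.support, f j (m j) = ∏ j ∈ ν.support, ∑ i ∈ Iic (ν j), f j i := by
  have hIic : (fun j => Iic (ν j)) = ⇑(Finsupp.rangeIcc 0 ν) := by
    ext j; simp [Finsupp.rangeIcc_apply, Iic_eq_Icc]
  rw [prod_sum, Iic_eq_Icc, bot_eq_zero, Finsupp.Icc_eq, Finsupp.support_zero, empty_union,
    Finset.finsupp, sum_map, hIic]
  -- `Finset.finsupp` builds its `pi` with classical decidable equality
  refine Finset.sum_congr (by congr!) fun p _ => ?_
  rw [← prod_attach]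
  refine Finset.prod_congr rfl fun j _ => ?_
  simp [Finsupp.indicator_of_mem j.2]

lemma msize_eq_sum_of_support_subset {m : ℕ →₀ ℕ} {s : Finset ℕ} (hs : m.support ⊆ s) :
    msize m = ∑ j ∈ s, m j :=
  Finsupp.sum_of_support_subset m hs _ fun _ _ => rfl

lemma msize_mono_s14 {m ν : ℕ →₀ ℕ} (h : m ≤ ν) : msize m ≤ msize ν := by
  rw [msize_eq_sum_of_support_subset (Finsupp.support_mono h),
    msize_eq_sum_of_support_subset subset_rfl]
  exact sum_le_sum fun j _ => h j

theorem sum_Iic_mchoose_mul_X_pow_msize (ν : ℕ →₀ ℕ) :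
    ∑ m ∈ Iic ν, (mchoose ν m : ℕ[X]) * X ^ msize m = (X + 1) ^ msize ν := by
  have hterm : ∀ m ∈ Iic ν, (mchoose ν m : ℕ[X]) * X ^ msize m
      = ∏ j ∈ ν.support, ((ν j).choose (m j) : ℕ[X]) * X ^ m j := by
    intro m hm
    rw [msize_eq_sum_of_support_subset (Finsupp.support_mono (mem_Iic.1 hm)), mchoose,
      prod_mul_distrib, prod_pow_eq_pow_sum, Nat.cast_prod]
  rw [sum_congr rfl hterm,
    Finsupp.sum_Iic_prod_eq_prod_sum ν fun j i => ((ν j).choose i : ℕ[X]) * X ^ i,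
    msize, Finsupp.sum, ← prod_pow_eq_pow_sum]
  refine prod_congr rfl fun j _ => ?_
  rw [add_pow, range_succ_eq_Iic]
  exact sum_congr rfl fun i _ => by ring

theorem sum_mchoose_filter_msize_eq_choose (ν : ℕ →₀ ℕ) (ℓ : ℕ) :
    ∑ m ∈ Iic ν with msize m = ℓ, mchoose ν m = (msize ν).choose ℓ := by
  have hcoeff := congrArg (coeff · ℓ) (sum_Iic_mchoose_mul_X_pow_msize ν)
  simp only [finsetSum_coeff, coeff_natCast_mul, coeff_X_pow, coeff_X_add_one_pow,
    Nat.cast_id] at hcoeff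
  rw [← hcoeff, sum_filter]
  exact sum_congr rfl fun m _ => by simp only [mul_ite, mul_one, mul_zero, @eq_comm _ ℓ]

theorem sum_Iic_mchoose_nsmul_eq_sum_choose_nsmul {M : Type*} [AddCommMonoid M]
    (ν : ℕ →₀ ℕ) (g : ℕ → M) :
    ∑ m ∈ Iic ν, mchoose ν m • g (msize m)
      = ∑ ℓ ∈ range (msize ν + 1), (msize ν).choose ℓ • g ℓ := by
  rw [← sum_fiberwise_of_maps_to (g := msize) (t := range (msize ν + 1))
    fun m hm => mem_range_succ_iff.2 (msize_mono_s14 (mem_Iic.1 hm))]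
  refine sum_congr rfl fun ℓ _ => ?_
  rw [sum_congr rfl fun m hm => by rw [(mem_filter.1 hm).2], ← sum_smul,
    sum_mchoose_filter_msize_eq_choose]

theorem sum_range_choose_mul_factorial_le (n : ℕ) :
    ∑ ℓ ∈ range (n + 1), (n.choose ℓ : ℝ) * ℓ ! ≤ Real.exp 1 * n ! := by
  have hterm : ∀ ℓ ∈ range (n + 1), (n.choose ℓ : ℝ) * ℓ ! = n ! * (1 / (n - ℓ) !) := by
    intro ℓ hℓ
    rw [← factorial_mul_descFactorial (mem_range_succ_iff.1 hℓ),
      descFactorial_eq_factorial_mul_choose]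
    push_cast
    field_simp
  calc ∑ ℓ ∈ range (n + 1), (n.choose ℓ : ℝ) * ℓ !
      = n ! * ∑ j ∈ range (n + 1), 1 ^ j / (j ! : ℝ) := by
        rw [sum_congr rfl hterm, ← mul_sum, ← sum_range_reflect, add_tsub_cancel_right]
        refine congrArg _ (sum_congr rfl fun j hj => ?_)
        rw [Nat.sub_sub_self (mem_range_succ_iff.1 hj), one_pow]
    _ ≤ n ! * Real.exp 1 := by gcongr; exact Real.sum_le_exp_of_nonneg zero_le_one _
    _ = Real.exp 1 * n ! := mul_comm _ _

theorem Real.rpow_le_mul_rpow_sub_one {a b σ : ℝ} (ha : 0 ≤ a) (hab : a ≤ b) (hσ : 1 ≤ σ) :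
    a ^ σ ≤ a * b ^ (σ - 1) :=
  calc a ^ σ = a * a ^ (σ - 1) := by rw [← rpow_one_add' ha (by linarith), add_sub_cancel]
    _ ≤ a * b ^ (σ - 1) := by gcongr

theorem stmt14 (ν : ℕ →₀ ℕ) (σ : ℝ) (hσ : 1 ≤ σ) :
    ∑ m ∈ Finset.Iic ν, (mchoose ν m : ℝ) * ((msize m).factorial : ℝ) ^ σ
      ≤ Real.exp 1 ^ σ * ((msize ν).factorial : ℝ) ^ σ := by
  set n := msize ν
  calc ∑ m ∈ Iic ν, (mchoose ν m : ℝ) * ((msize m) ! : ℝ) ^ σ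
      ≤ ∑ m ∈ Iic ν, (mchoose ν m : ℝ) * ((msize m) ! * (n ! : ℝ) ^ (σ - 1)) := by
        gcongr with m hm
        exact Real.rpow_le_mul_rpow_sub_one (by positivity)
          (mod_cast factorial_le (msize_mono_s14 (mem_Iic.1 hm))) hσ
    _ = (∑ ℓ ∈ range (n + 1), (n.choose ℓ : ℝ) * ℓ !) * (n ! : ℝ) ^ (σ - 1) := by
        simp_rw [← mul_assoc, ← sum_mul, ← nsmul_eq_mul]
        rw [sum_Iic_mchoose_nsmul_eq_sum_choose_nsmul ν fun ℓ => (ℓ ! : ℝ)]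
    _ ≤ Real.exp 1 * n ! * (n ! : ℝ) ^ (σ - 1) := by
        gcongr; exact sum_range_choose_mul_factorial_le n
    _ = Real.exp 1 * (n ! : ℝ) ^ σ := by
        rw [mul_assoc, ← Real.rpow_one_add' (by positivity) (by linarith), add_sub_cancel]
    _ ≤ Real.exp 1 ^ σ * (n ! : ℝ) ^ σ := by
        gcongr; exact Real.self_le_rpow_of_one_le (Real.one_le_exp zero_le_one) hσ
end
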